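/- The classes of timed languages recognizable by nondeterministic timed automata (with arbitrarily many clocks) and by one-clock alternating timed automata are incomparable: there exists a timed language recognized by a one-clock alternating timed automaton but by no nondeterministic timed automaton, and there exists a timed language recognized by a (deterministic) nondeterministic timed automaton with two clocks but by no one-clock alternating timed automaton. -/

import Mathlib

/-!
A one-clock ATA accepts the words in which no two events are exactly one time unit apart: at
every event it spawns a copy with a fresh clock that dies on reading the value `1`. Against an
NTA with `k` clocks, take `n = k + 1` events in `(0, 1/2)` followed by `n` events, each just
before the unit translate of its partner among the first ones. After the first `n` events some
clock must measure the age of each of the first `n` events: if the age of event `j` is forgotten,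
delaying event `n + j` onto the exact unit translate of event `j` changes no guard along the run,
so the NTA also accepts a word with a unit gap. With only `k` clocks this is impossible.

Conversely, the deterministic two-clock NTA that resets its clocks at the first two events
(at times `1/4` and `1/2`) accepts exactly when a later event falls in the window `(5/4, 3/2)`.
If all later events lie in `(1, 7/4)`, the clock of a one-clock ATA is determined by when it was
last reset (never, at the first event, at the second, or after time `1`), and each of these
classes sees the window zone like the zone just before it or like the zone just after it.
Acceptance of `early^K window^m late^K` is thus given by iterates of self-maps of a finite set,
and a common period `P` of all of them makes `m = P` and `m = 0` indistinguishable.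
-/

/-- Clock constraints over a set `C` of clocks: comparisons with natural
number constants, closed under conjunction and negation. -/
inductive ClockConstraint (C : Type) : Type where
  | lt : C → ℕ → ClockConstraint C
  | le : C → ℕ → ClockConstraint C
  | conj : ClockConstraint C → ClockConstraint C → ClockConstraint C
  | neg : ClockConstraint C → ClockConstraint C

/-- Satisfaction of a clock constraint by a clock valuation. -/
def ClockConstraint.sat {C : Type} (v : C → NNReal) : ClockConstraint C → Prop
  | .lt x c => (v x : ℝ) < (c : ℝ)
  | .le x c => (v x : ℝ) ≤ (c : ℝ)
  | .conj s t => s.sat v ∧ t.sat v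
  | .neg s => ¬ s.sat v

/-- Positive boolean formulas over a set `X` of propositions. -/
inductive PosBool (X : Type) : Type where
  | atom : X → PosBool X
  | conj : PosBool X → PosBool X → PosBool X
  | disj : PosBool X → PosBool X → PosBool X

/-- Evaluation of a positive boolean formula under a valuation of atoms. -/
def PosBool.eval {X : Type} (f : X → Prop) : PosBool X → Prop
  | .atom x => f x
  | .conj b c => b.eval f ∧ c.eval f
  | .disj b c => b.eval f ∨ c.eval f

/-- A positive boolean formula is disjunction-free (purely conjunctive). -/
def PosBool.orFree {X : Type} : PosBool X → Prop
  | .atom _ => True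
  | .conj b c => b.orFree ∧ c.orFree
  | .disj _ _ => False

/-- A positive boolean formula is conjunction-free (purely disjunctive). -/
def PosBool.andFree {X : Type} : PosBool X → Prop
  | .atom _ => True
  | .conj _ _ => False
  | .disj b c => b.andFree ∧ c.andFree

open Classical in
/-- Reset the clocks in `r` to zero. -/
noncomputable def resetVal {C : Type} (v : C → NNReal) (r : Set C) : C → NNReal :=
  fun x => if x ∈ r then 0 else v x

/-- A (finite) timed word: each letter comes with the delay elapsed since the
previous letter (a nonnegative real). -/
abbrev TimedWord (A : Type) : Type := List (A × NNReal)
/-- An alternating timed automaton with input alphabet `A`, clocks `C`,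
locations `Q`.  The transition function is given, for each location and
letter, by a finite list of (guard, positive boolean formula) pairs; the
`partition` field is the Partition condition: for every location, letter and
clock valuation there is exactly one defined guard satisfied by the
valuation. -/
structure ATA (A C Q : Type) where
  init : Q
  accept : Set Q
  trans : Q → A → List (ClockConstraint C × PosBool (Q × Set C))
  partition : ∀ (q : Q) (a : A) (v : C → NNReal),
    ∃! gb : ClockConstraint C × PosBool (Q × Set C), gb ∈ trans q a ∧ gb.1.sat v

/-- Acceptance of a timed word from a given configuration, defined by
recursion on the word: this is exactly the existence of a winning strategy
for Eve in the acceptance game (Eve resolves disjunctions, Adam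
conjunctions), and Eve wins iff the final location is accepting. -/
def ATA.AccFrom {A C Q : Type} (M : ATA A C Q) : TimedWord A → Q → (C → NNReal) → Prop
  | [], q, _ => q ∈ M.accept
  | (a, t) :: w, q, v =>
      ∃ gb ∈ M.trans q a, gb.1.sat (fun x => v x + t) ∧
        gb.2.eval (fun qr => M.AccFrom w qr.1 (resetVal (fun x => v x + t) qr.2))

/-- The timed language of an alternating timed automaton. -/
def ATA.lang {A C Q : Type} (M : ATA A C Q) : Set (TimedWord A) :=
  { w | M.AccFrom w M.init (fun _ => 0) }

/-- A purely universal ATA: no disjunction occurs in the transition formulas. -/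
def ATA.PurelyUniversal {A C Q : Type} (M : ATA A C Q) : Prop :=
  ∀ (q : Q) (a : A), ∀ gb ∈ M.trans q a, gb.2.orFree

/-- A purely existential ATA: no conjunction occurs in the transition formulas. -/
def ATA.PurelyExistential {A C Q : Type} (M : ATA A C Q) : Prop :=
  ∀ (q : Q) (a : A), ∀ gb ∈ M.trans q a, gb.2.andFree
/-- A transition rule of a nondeterministic timed automaton. -/
structure NTARule (A C Q : Type) where
  src : Q
  letter : A
  guard : ClockConstraint C
  tgt : Q
  resets : Set C

/-- A nondeterministic timed automaton with alphabet `A`, clocks `C` and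
locations `Q`, given by a finite list of transition rules. -/
structure NTA (A C Q : Type) where
  init : Q
  accept : Set Q
  rules : List (NTARule A C Q)

/-- Acceptance (existence of an accepting run) from a configuration. -/
def NTA.AccFrom {A C Q : Type} (M : NTA A C Q) : TimedWord A → Q → (C → NNReal) → Prop
  | [], q, _ => q ∈ M.accept
  | (a, t) :: w, q, v =>
      ∃ ρ ∈ M.rules, ρ.src = q ∧ ρ.letter = a ∧ ρ.guard.sat (fun x => v x + t) ∧
        M.AccFrom w ρ.tgt (resetVal (fun x => v x + t) ρ.resets)

/-- The timed language of a nondeterministic timed automaton. -/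
def NTA.lang {A C Q : Type} (M : NTA A C Q) : Set (TimedWord A) :=
  { w | M.AccFrom w M.init (fun _ => 0) }

/-- Determinism: in every configuration at most one transition is enabled on
each input letter. -/
def NTA.Deterministic {A C Q : Type} (M : NTA A C Q) : Prop :=
  ∀ (v : C → NNReal), ∀ ρ₁ ∈ M.rules, ∀ ρ₂ ∈ M.rules,
    ρ₁.src = ρ₂.src → ρ₁.letter = ρ₂.letter →
    ρ₁.guard.sat v → ρ₂.guard.sat v → ρ₁ = ρ₂

def SameUnitInterval (a b : ℝ) : Prop :=
  ∃ k : ℕ, a ∈ Set.Ioo (k : ℝ) (k + 1) ∧ b ∈ Set.Ioo (k : ℝ) (k + 1)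

namespace SameUnitInterval

variable {a b : ℝ}

lemma lt_natCast_and_lt_or_natCast_lt_and_lt (h : SameUnitInterval a b) (c : ℕ) :
    a < c ∧ b < c ∨ c < a ∧ c < b := by
  obtain ⟨k, ha, hb⟩ := h
  rcases le_or_gt c k with hc | hc
  · have hc' : (c : ℝ) ≤ k := by exact_mod_cast hc
    exact Or.inr ⟨by linarith [ha.1], by linarith [hb.1]⟩
  · have hc' : (k : ℝ) + 1 ≤ c := by exact_mod_cast hc
    exact Or.inl ⟨by linarith [ha.2], by linarith [hb.2]⟩

lemma lt_natCast_iff (h : SameUnitInterval a b) (c : ℕ) : a < c ↔ b < c := by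
  rcases h.lt_natCast_and_lt_or_natCast_lt_and_lt c with ⟨ha, hb⟩ | ⟨ha, hb⟩
  · exact iff_of_true ha hb
  · exact iff_of_false ha.asymm hb.asymm

lemma le_natCast_iff (h : SameUnitInterval a b) (c : ℕ) : a ≤ c ↔ b ≤ c := by
  rcases h.lt_natCast_and_lt_or_natCast_lt_and_lt c with ⟨ha, hb⟩ | ⟨ha, hb⟩
  · exact iff_of_true ha.le hb.le
  · exact iff_of_false ha.not_ge hb.not_ge

end SameUnitInterval

lemma ClockConstraint.sat_congr {C : Type} (φ : ClockConstraint C) {v v' : C → NNReal}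
    (h : ∀ x, SameUnitInterval (v x) (v' x)) : φ.sat v ↔ φ.sat v' := by
  induction φ with
  | lt x c => exact (h x).lt_natCast_iff c
  | le x c => exact (h x).le_natCast_iff c
  | conj s t ihs iht => exact and_congr ihs iht
  | neg s ihs => exact not_congr ihs

lemma PosBool.eval_congr {X : Type} (b : PosBool X) {f g : X → Prop} (h : ∀ x, f x ↔ g x) :
    b.eval f ↔ b.eval g := by
  induction b with
  | atom x => exact h x
  | conj s t ihs iht => exact and_congr ihs iht
  | disj s t ihs iht => exact or_congr ihs iht

lemma resetVal_of_mem {C : Type} (v : C → NNReal) {r : Set C} {x : C} (hx : x ∈ r) :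
    resetVal v r x = 0 := by
  simp [resetVal, hx]

lemma resetVal_of_notMem {C : Type} (v : C → NNReal) {r : Set C} {x : C} (hx : x ∉ r) :
    resetVal v r x = v x := by
  simp [resetVal, hx]

@[simp]
lemma resetVal_empty {C : Type} (v : C → NNReal) : resetVal v ∅ = v :=
  funext fun _ => resetVal_of_notMem v (Set.notMem_empty _)

/-- The absolute time of the `k`-th event of `w`, counting from `1`; `eventTime w 0 = 0`. -/
def eventTime {A : Type} (w : TimedWord A) (k : ℕ) : ℝ :=
  ((w.take k).map (fun e => (e.2 : ℝ))).sum

@[simp]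
lemma eventTime_zero {A : Type} (w : TimedWord A) : eventTime w 0 = 0 := by
  simp [eventTime]

@[simp]
lemma eventTime_cons_succ {A : Type} (e : A × NNReal) (w : TimedWord A) (k : ℕ) :
    eventTime (e :: w) (k + 1) = e.2 + eventTime w k := by
  simp [eventTime]

/-- The word whose events occur at the times `f (a + 1), …, f (a + cnt)`, measured from
time `f a`. -/
noncomputable def wordOfTimes (f : ℕ → ℝ) : ℕ → ℕ → TimedWord Unit
  | _, 0 => []
  | a, cnt + 1 => ((), (f (a + 1) - f a).toNNReal) :: wordOfTimes f (a + 1) cnt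

section wordOfTimes

variable (f : ℕ → ℝ)

@[simp]
lemma wordOfTimes_zero (a : ℕ) : wordOfTimes f a 0 = [] := rfl

lemma wordOfTimes_succ (a cnt : ℕ) :
    wordOfTimes f a (cnt + 1) = ((), (f (a + 1) - f a).toNNReal) :: wordOfTimes f (a + 1) cnt :=
  rfl

@[simp]
lemma length_wordOfTimes (a cnt : ℕ) : (wordOfTimes f a cnt).length = cnt := by
  induction cnt generalizing a with
  | zero => rfl
  | succ cnt ih => simp [wordOfTimes_succ, ih]

lemma wordOfTimes_add (a c₁ c₂ : ℕ) :
    wordOfTimes f a (c₁ + c₂) = wordOfTimes f a c₁ ++ wordOfTimes f (a + c₁) c₂ := by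
  induction c₁ generalizing a with
  | zero => simp
  | succ c₁ ih =>
    rw [Nat.add_right_comm, wordOfTimes_succ, ih, wordOfTimes_succ, List.cons_append,
      Nat.add_right_comm a, Nat.add_assoc]

lemma wordOfTimes_congr {g : ℕ → ℝ} {a cnt : ℕ}
    (h : ∀ i, a ≤ i → i ≤ a + cnt → f i = g i) :
    wordOfTimes f a cnt = wordOfTimes g a cnt := by
  induction cnt generalizing a with
  | zero => rfl
  | succ cnt ih =>
    rw [wordOfTimes_succ, wordOfTimes_succ, h a le_rfl (by omega), h (a + 1) (by omega) (by omega),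
      ih fun i h₁ h₂ => h i (by omega) (by omega)]

variable {f}

lemma coe_toNNReal_sub_of_monotone (hf : Monotone f) (a : ℕ) :
    ((f (a + 1) - f a).toNNReal : ℝ) = f (a + 1) - f a :=
  Real.coe_toNNReal _ (sub_nonneg.mpr (hf (Nat.le_succ a)))

lemma eventTime_wordOfTimes (hf : Monotone f) {k cnt : ℕ} (hk : k ≤ cnt) (a : ℕ) :
    eventTime (wordOfTimes f a cnt) k = f (a + k) - f a := by
  induction k generalizing a cnt with
  | zero => simp
  | succ k ih =>
    obtain ⟨cnt, rfl⟩ : ∃ c, cnt = c + 1 := ⟨cnt - 1, by omega⟩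
    rw [wordOfTimes_succ, eventTime_cons_succ, coe_toNNReal_sub_of_monotone hf,
      ih (by omega), show a + 1 + k = a + (k + 1) by omega]
    ring

end wordOfTimes

namespace ATA

variable {A C Q : Type}

def ofGuard (init : Q) (accept : Set Q) (g : Q → A → ClockConstraint C)
    (b₁ b₂ : Q → A → PosBool (Q × Set C)) : ATA A C Q where
  init := init
  accept := accept
  trans q a := [(g q a, b₁ q a), (.neg (g q a), b₂ q a)]
  partition q a v := by
    by_cases h : (g q a).sat v
    · refine ⟨_, ⟨List.mem_cons_self, h⟩, ?_⟩
      rintro gb ⟨hm, hs⟩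
      rcases List.mem_pair.mp hm with rfl | rfl
      · rfl
      · exact absurd h hs
    · refine ⟨(.neg (g q a), b₂ q a), ⟨by simp, h⟩, ?_⟩
      rintro gb ⟨hm, hs⟩
      rcases List.mem_pair.mp hm with rfl | rfl
      · exact absurd hs h
      · rfl

lemma accFrom_cons_of_trans_eq (M : ATA A C Q) {q : Q} {a : A} {g : ClockConstraint C}
    {b₁ b₂ : PosBool (Q × Set C)} (h : M.trans q a = [(g, b₁), (.neg g, b₂)]) {t : NNReal}
    {w : TimedWord A} {v : C → NNReal} :
    M.AccFrom ((a, t) :: w) q v ↔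
      let v' := fun x => v x + t
      let next := fun qr : Q × Set C => M.AccFrom w qr.1 (resetVal v' qr.2)
      g.sat v' ∧ b₁.eval next ∨ ¬ g.sat v' ∧ b₂.eval next := by
  simp [AccFrom, h, ClockConstraint.sat]

lemma accFrom_cons_congr (M : ATA A C Q) {a : A} {t : NNReal} {w w' : TimedWord A} {q : Q}
    {v : C → NNReal}
    (h : ∀ q' r, M.AccFrom w q' (resetVal (fun x => v x + t) r) ↔
      M.AccFrom w' q' (resetVal (fun x => v x + t) r)) :
    M.AccFrom ((a, t) :: w) q v ↔ M.AccFrom ((a, t) :: w') q v :=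
  exists_congr fun _ => and_congr_right fun _ => and_congr_right fun _ =>
    PosBool.eval_congr _ fun qr => h qr.1 qr.2

end ATA

namespace NTA

variable {A C Q : Type} (N : NTA A C Q)

def Reach : TimedWord A → Q → (C → NNReal) → Q → (C → NNReal) → Prop
  | [], q, v, q', v' => q' = q ∧ v' = v
  | (a, t) :: w, q, v, q', v' =>
      ∃ ρ ∈ N.rules, ρ.src = q ∧ ρ.letter = a ∧ ρ.guard.sat (fun x => v x + t) ∧
        Reach w ρ.tgt (resetVal (fun x => v x + t) ρ.resets) q' v'

lemma accFrom_append (u w : TimedWord A) (q : Q) (v : C → NNReal) :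
    N.AccFrom (u ++ w) q v ↔ ∃ q' v', N.Reach u q v q' v' ∧ N.AccFrom w q' v' := by
  induction u generalizing q v with
  | nil => simp [Reach]
  | cons e u ih =>
    obtain ⟨a, t⟩ := e
    simp only [List.cons_append, AccFrom, Reach, ih]
    constructor
    · rintro ⟨ρ, hρ, hsrc, ha, hsat, q', v', hr, hacc⟩
      exact ⟨q', v', ⟨ρ, hρ, hsrc, ha, hsat, hr⟩, hacc⟩
    · rintro ⟨q', v', ⟨ρ, hρ, hsrc, ha, hsat, hr⟩, hacc⟩
      exact ⟨ρ, hρ, hsrc, ha, hsat, q', v', hr, hacc⟩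

lemma Deterministic.accFrom_cons_iff {N : NTA A C Q} (hN : N.Deterministic) {ρ : NTARule A C Q}
    (hρ : ρ ∈ N.rules) {a : A} {t : NNReal} {w : TimedWord A} {v : C → NNReal}
    (ha : ρ.letter = a) (hsat : ρ.guard.sat fun x => v x + t) :
    N.AccFrom ((a, t) :: w) ρ.src v ↔
      N.AccFrom w ρ.tgt (resetVal (fun x => v x + t) ρ.resets) := by
  refine ⟨fun ⟨ρ', hρ', hsrc, ha', hsat', hacc⟩ => ?_, fun h => ⟨ρ, hρ, rfl, ha, hsat, h⟩⟩
  rwa [hN _ ρ hρ ρ' hρ' hsrc.symm (ha.trans ha'.symm) hsat hsat']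

lemma accFrom_cons_of_sameUnitInterval {a : A} {t t' : NNReal} {w w' : TimedWord A} {q : Q}
    {v v' : C → NNReal} (hreg : ∀ x, SameUnitInterval ((v x : ℝ) + t) ((v' x : ℝ) + t'))
    (hnext : ∀ q' r, N.AccFrom w q' (resetVal (fun x => v x + t) r) →
      N.AccFrom w' q' (resetVal (fun x => v' x + t') r)) :
    N.AccFrom ((a, t) :: w) q v → N.AccFrom ((a, t') :: w') q v' := by
  rintro ⟨ρ, hρ, hsrc, ha, hsat, hacc⟩
  refine ⟨ρ, hρ, hsrc, ha, (ρ.guard.sat_congr fun x => ?_).1 hsat, hnext _ _ hacc⟩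
  push_cast
  exact hreg x

lemma Reach.clock_wordOfTimes {N : NTA Unit C Q} {f : ℕ → ℝ} (hf : Monotone f) {a cnt : ℕ}
    {q q' : Q} {v v' : C → NNReal} (h : N.Reach (wordOfTimes f a cnt) q v q' v') (x : C) :
    (v' x : ℝ) = v x + (f (a + cnt) - f a) ∨
      ∃ k, a < k ∧ k ≤ a + cnt ∧ (v' x : ℝ) = f (a + cnt) - f k := by
  induction cnt generalizing a q v with
  | zero =>
    obtain ⟨rfl, rfl⟩ := h
    simp
  | succ cnt ih =>
    obtain ⟨ρ, -, -, -, -, hr⟩ := h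
    have hd := coe_toNNReal_sub_of_monotone hf a
    rw [show a + (cnt + 1) = a + 1 + cnt by omega]
    rcases ih hr with h | ⟨k, hk₁, hk₂, h⟩
    · by_cases hx : x ∈ ρ.resets
      · rw [resetVal_of_mem _ hx] at h
        exact Or.inr ⟨a + 1, by omega, by omega, by simpa using h⟩
      · rw [resetVal_of_notMem _ hx] at h
        push_cast at h
        exact Or.inl (by rw [h, hd]; ring)
    · exact Or.inr ⟨k, by omega, by omega, h⟩

end NTA

/-- Finitely many values of `n ↦ (f ↦ f^[n])` force a repetition. -/
lemma Finite.exists_iterate_add_eq (α : Type) [Finite α] :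
    ∃ K P : ℕ, 0 < P ∧ ∀ f : α → α, f^[K + P] = f^[K] := by
  obtain ⟨i, j, hne, heq⟩ :=
    Finite.exists_ne_map_eq_of_infinite fun n : ℕ => fun f : α → α => f^[n]
  wlog hij : i < j generalizing i j
  · exact this j i hne.symm heq.symm (by omega)
  refine ⟨i, j - i, by omega, fun f => ?_⟩
  rw [Nat.add_sub_cancel' hij.le]
  exact (congrFun heq f).symm

inductive GapLoc : Type
  | main
  | watch
  | dead
deriving DecidableEq

instance : Fintype GapLoc :=
  ⟨{.main, .watch, .dead}, fun q => by cases q <;> simp⟩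

def unitGuard : ClockConstraint (Fin 1) := .conj (.le 0 1) (.neg (.lt 0 1))

lemma unitGuard_sat (v : Fin 1 → NNReal) : unitGuard.sat v ↔ (v 0 : ℝ) = 1 := by
  simp [unitGuard, ClockConstraint.sat, le_antisymm_iff]

def gapMove : GapLoc → Bool → PosBool (GapLoc × Set (Fin 1))
  | .main, _ => .conj (.atom (.main, ∅)) (.atom (.watch, Set.univ))
  | .watch, true => .atom (.dead, ∅)
  | .watch, false => .atom (.watch, ∅)
  | .dead, _ => .atom (.dead, ∅)

def noUnitGapATA : ATA Unit (Fin 1) GapLoc :=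
  .ofGuard .main {.main, .watch} (fun _ _ => unitGuard) (fun q _ => gapMove q true)
    (fun q _ => gapMove q false)

def NoUnitGap (w : TimedWord Unit) : Prop :=
  ∀ j < w.length, ∀ i < j, eventTime w (j + 1) - eventTime w (i + 1) ≠ 1

lemma noUnitGap_cons (e : Unit × NNReal) (w : TimedWord Unit) :
    NoUnitGap (e :: w) ↔ (∀ j < w.length, eventTime w (j + 1) ≠ 1) ∧ NoUnitGap w := by
  simp only [NoUnitGap, List.length_cons, Nat.forall_lt_succ_left, Nat.not_lt_zero,
    IsEmpty.forall_iff, implies_true, true_and, eventTime_cons_succ, eventTime_zero,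
    sub_zero, add_sub_add_left_eq_sub, ← forall_and]

namespace noUnitGapATA

lemma accFrom_cons (q : GapLoc) {a : Unit} {t : NNReal} {w : TimedWord Unit}
    {v : Fin 1 → NNReal} :
    noUnitGapATA.AccFrom ((a, t) :: w) q v ↔
      let next := fun qr : GapLoc × Set (Fin 1) =>
        noUnitGapATA.AccFrom w qr.1 (resetVal (fun x => v x + t) qr.2)
      (v 0 : ℝ) + t = 1 ∧ (gapMove q true).eval next ∨
        (v 0 : ℝ) + t ≠ 1 ∧ (gapMove q false).eval next := by
  rw [ATA.accFrom_cons_of_trans_eq _ rfl]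
  simp only [unitGuard_sat, NNReal.coe_add, ne_eq]

lemma not_accFrom_dead (w : TimedWord Unit) (v : Fin 1 → NNReal) :
    ¬ noUnitGapATA.AccFrom w .dead v := by
  induction w generalizing v with
  | nil => simp [ATA.AccFrom, noUnitGapATA, ATA.ofGuard]
  | cons e w ih => obtain ⟨a, t⟩ := e; simp [accFrom_cons, gapMove, PosBool.eval, ih]

lemma accFrom_watch_iff (w : TimedWord Unit) (v : Fin 1 → NNReal) :
    noUnitGapATA.AccFrom w .watch v ↔
      ∀ j < w.length, (v 0 : ℝ) + eventTime w (j + 1) ≠ 1 := by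
  induction w generalizing v with
  | nil => simp [ATA.AccFrom, noUnitGapATA, ATA.ofGuard]
  | cons e w ih =>
    obtain ⟨a, t⟩ := e
    simp only [accFrom_cons, gapMove, PosBool.eval, not_accFrom_dead, and_false, false_or,
      resetVal_empty, ih, List.length_cons, Nat.forall_lt_succ_left, eventTime_cons_succ,
      eventTime_zero, NNReal.coe_add, add_zero, add_assoc]

lemma accFrom_main_iff (w : TimedWord Unit) (v : Fin 1 → NNReal) :
    noUnitGapATA.AccFrom w .main v ↔ NoUnitGap w := by
  induction w generalizing v with
  | nil => simp [ATA.AccFrom, noUnitGapATA, ATA.ofGuard, NoUnitGap]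
  | cons e w ih =>
    obtain ⟨a, t⟩ := e
    simp only [accFrom_cons, gapMove, PosBool.eval, ih, accFrom_watch_iff, noUnitGap_cons,
      resetVal_of_mem _ (Set.mem_univ _), NNReal.coe_zero, zero_add]
    tauto

lemma lang_eq : noUnitGapATA.lang = {w | NoUnitGap w} :=
  Set.ext fun w => accFrom_main_iff w _

end noUnitGapATA

lemma natCast_div_sub_mem_Ioo {a b D k : ℕ} (hD : 0 < D) (h₁ : a + k * D < b)
    (h₂ : b < a + (k + 1) * D) : (b : ℝ) / D - a / D ∈ Set.Ioo (k : ℝ) (k + 1) := by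
  have hD' : (0 : ℝ) < D := by exact_mod_cast hD
  have h₁' : (a : ℝ) + k * D < b := by exact_mod_cast h₁
  have h₂' : (b : ℝ) < a + (k + 1) * D := by exact_mod_cast h₂
  rw [← sub_div, Set.mem_Ioo, lt_div_iff₀ hD', div_lt_iff₀ hD']
  constructor <;> linarith

lemma natCast_div_sub_eq_one_iff {a b D : ℕ} (hD : 0 < D) :
    (b : ℝ) / D - a / D = 1 ↔ b = a + D := by
  rw [← sub_div, div_eq_one_iff_eq (by positivity), sub_eq_iff_eq_add']
  exact_mod_cast Iff.rfl

section Witness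

variable (n : ℕ)

/-- In units of `1 / (4n + 4)`, event `i ≤ n` happens at `2i` and event `n + i` one unit
before `4n + 4 + 2i`, the unit translate of event `i`. -/
def stamp (i : ℕ) : ℕ := 2 * i + if n < i then 2 * n + 3 else 0

/-- Event `n + j` delayed by one unit, to lie exactly one time unit after event `j`. -/
def shiftedStamp (j i : ℕ) : ℕ := stamp n i + if i = n + j then 1 else 0

noncomputable def witnessTime (i : ℕ) : ℝ := (stamp n i : ℝ) / (4 * n + 4 : ℕ)

noncomputable def shiftedTime (j i : ℕ) : ℝ := (shiftedStamp n j i : ℝ) / (4 * n + 4 : ℕ)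

noncomputable def witness : TimedWord Unit := wordOfTimes (witnessTime n) 0 (2 * n)

noncomputable def shiftedWitness (j : ℕ) : TimedWord Unit :=
  wordOfTimes (shiftedTime n j) 0 (2 * n)

lemma stamp_strictMono : StrictMono (stamp n) :=
  strictMono_nat_of_lt_succ fun i => by unfold stamp; split_ifs <;> omega

lemma shiftedStamp_strictMono {j : ℕ} (hj : 1 ≤ j) : StrictMono (shiftedStamp n j) :=
  strictMono_nat_of_lt_succ fun i => by unfold shiftedStamp stamp; split_ifs <;> omega

lemma witnessTime_strictMono : StrictMono (witnessTime n) := fun _ _ h =>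
  div_lt_div_of_pos_right (by exact_mod_cast stamp_strictMono n h) (by positivity)

lemma witnessTime_monotone : Monotone (witnessTime n) := (witnessTime_strictMono n).monotone

lemma shiftedTime_monotone {j : ℕ} (hj : 1 ≤ j) : Monotone (shiftedTime n j) := fun _ _ h =>
  div_le_div_of_nonneg_right (by exact_mod_cast (shiftedStamp_strictMono n hj).monotone h)
    (by positivity)

lemma shiftedTime_of_lt {j i : ℕ} (h : i < n + j) : shiftedTime n j i = witnessTime n i := by
  simp [shiftedTime, witnessTime, shiftedStamp, h.ne]

lemma sameUnitInterval_shiftedTime {j i q : ℕ} (hj₁ : 1 ≤ j) (hjn : j ≤ n) (hq₁ : n + j ≤ q)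
    (hq₂ : q ≤ 2 * n) (hi : i < q) (hij : i ≠ j) :
    SameUnitInterval (witnessTime n q - witnessTime n i)
      (shiftedTime n j q - shiftedTime n j i) := by
  have hD : 0 < 4 * n + 4 := by omega
  by_cases hgap : i + n < q
  · refine ⟨1, natCast_div_sub_mem_Ioo hD ?_ ?_, natCast_div_sub_mem_Ioo hD ?_ ?_⟩ <;>
      (simp only [shiftedStamp, stamp]; split_ifs <;> omega)
  · refine ⟨0, natCast_div_sub_mem_Ioo hD ?_ ?_, natCast_div_sub_mem_Ioo hD ?_ ?_⟩ <;>
      (simp only [shiftedStamp, stamp]; split_ifs <;> omega)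

lemma witness_noUnitGap : NoUnitGap (witness n) := by
  intro k hk i hik
  rw [witness, length_wordOfTimes] at hk
  rw [witness, eventTime_wordOfTimes (witnessTime_monotone n) (by omega),
    eventTime_wordOfTimes (witnessTime_monotone n) (by omega), sub_sub_sub_cancel_right,
    witnessTime, witnessTime, ne_eq, natCast_div_sub_eq_one_iff (by omega)]
  unfold stamp
  split_ifs <;> omega

lemma not_noUnitGap_shiftedWitness {j : ℕ} (hj₁ : 1 ≤ j) (hjn : j ≤ n) :
    ¬ NoUnitGap (shiftedWitness n j) := by
  intro h
  refine h (n + j - 1) (by simp [shiftedWitness]; omega) (j - 1) (by omega) ?_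
  rw [shiftedWitness, eventTime_wordOfTimes (shiftedTime_monotone n hj₁) (by omega),
    eventTime_wordOfTimes (shiftedTime_monotone n hj₁) (by omega), sub_sub_sub_cancel_right,
    shiftedTime, shiftedTime, natCast_div_sub_eq_one_iff (by omega)]
  unfold shiftedStamp stamp
  split_ifs <;> omega

end Witness

namespace NTA

variable {C Q : Type} {N : NTA Unit C Q} {n j : ℕ}

lemma accFrom_shiftedTime_of_accFrom_witnessTime (hj₁ : 1 ≤ j) (hjn : j ≤ n) {cnt p : ℕ}
    (hp₁ : n + j ≤ p + 1) (hp₂ : p + cnt ≤ 2 * n) {q : Q} {v v' : C → NNReal}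
    (hv : ∀ x, ∃ i ≤ p, i ≠ j ∧ (v x : ℝ) = witnessTime n p - witnessTime n i ∧
      (v' x : ℝ) = shiftedTime n j p - shiftedTime n j i)
    (hacc : N.AccFrom (wordOfTimes (witnessTime n) p cnt) q v) :
    N.AccFrom (wordOfTimes (shiftedTime n j) p cnt) q v' := by
  induction cnt generalizing p q v v' with
  | zero => exact hacc
  | succ cnt ih =>
    rw [wordOfTimes_succ] at hacc ⊢
    have hd := coe_toNNReal_sub_of_monotone (witnessTime_monotone n) p
    have hd' := coe_toNNReal_sub_of_monotone (shiftedTime_monotone n hj₁) p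
    refine N.accFrom_cons_of_sameUnitInterval (fun x => ?_) (fun q' r h => ?_) hacc
    · obtain ⟨i, hip, hij, hvx, hv'x⟩ := hv x
      rw [hd, hd', hvx, hv'x, sub_add_sub_cancel', sub_add_sub_cancel']
      exact sameUnitInterval_shiftedTime n hj₁ hjn hp₁ (by omega) (by omega) hij
    · refine ih (by omega) (by omega) (fun x => ?_) h
      by_cases hx : x ∈ r
      · exact ⟨p + 1, le_rfl, by omega, by simp [resetVal_of_mem _ hx],
          by simp [resetVal_of_mem _ hx]⟩
      · obtain ⟨i, hip, hij, hvx, hv'x⟩ := hv x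
        refine ⟨i, by omega, hij, ?_, ?_⟩
        · rw [resetVal_of_notMem _ hx, NNReal.coe_add, hd, hvx]; ring
        · rw [resetVal_of_notMem _ hx, NNReal.coe_add, hd', hv'x]; ring

lemma exists_clock_eq_witnessTime_sub (hjn : j ≤ n) {q₁ q₂ : Q} {v₁ v₂ : C → NNReal}
    (hreach₁ : N.Reach (wordOfTimes (witnessTime n) 0 n) N.init (fun _ => 0) q₁ v₁)
    (hreach₂ : N.Reach (wordOfTimes (witnessTime n) n (j - 1)) q₁ v₁ q₂ v₂)
    (hforget : ∀ x, (v₁ x : ℝ) ≠ witnessTime n n - witnessTime n j) (x : C) :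
    ∃ i ≤ n + (j - 1), i ≠ j ∧
      (v₂ x : ℝ) = witnessTime n (n + (j - 1)) - witnessTime n i := by
  have hmono := witnessTime_monotone n
  have hv₁ : ∃ i ≤ n, (v₁ x : ℝ) = witnessTime n n - witnessTime n i := by
    rcases hreach₁.clock_wordOfTimes hmono x with h | ⟨i, -, hi, h⟩
    · exact ⟨0, by omega, by simpa using h⟩
    · exact ⟨i, by omega, by simpa using h⟩
  rcases hreach₂.clock_wordOfTimes hmono x with h | ⟨i, hi₁, hi₂, h⟩
  · obtain ⟨i, hin, hi⟩ := hv₁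
    refine ⟨i, by omega, fun hij => hforget x (hij ▸ hi), ?_⟩
    rw [h, hi]
    ring
  · exact ⟨i, hi₂, by omega, h⟩

lemma accFrom_shiftedWitness (hj₁ : 1 ≤ j) (hjn : j ≤ n) {q₁ : Q} {v₁ : C → NNReal}
    (hreach : N.Reach (wordOfTimes (witnessTime n) 0 n) N.init (fun _ => 0) q₁ v₁)
    (hacc : N.AccFrom (wordOfTimes (witnessTime n) n n) q₁ v₁)
    (hforget : ∀ x, (v₁ x : ℝ) ≠ witnessTime n n - witnessTime n j) :
    N.AccFrom (shiftedWitness n j) N.init (fun _ => 0) := by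
  have hsplit : ∀ f : ℕ → ℝ, wordOfTimes f n n =
      wordOfTimes f n (j - 1) ++ wordOfTimes f (n + (j - 1)) (n - j + 1) := fun f => by
    rw [← wordOfTimes_add]; congr 1; omega
  have hshift : shiftedWitness n j = wordOfTimes (witnessTime n) 0 n ++
      (wordOfTimes (witnessTime n) n (j - 1) ++
        wordOfTimes (shiftedTime n j) (n + (j - 1)) (n - j + 1)) := by
    rw [shiftedWitness, two_mul, wordOfTimes_add, zero_add, hsplit,
      wordOfTimes_congr _ fun i _ hi => shiftedTime_of_lt n (j := j) (i := i) (by omega),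
      wordOfTimes_congr _ fun i _ hi => shiftedTime_of_lt n (j := j) (i := i) (by omega)]
  rw [hsplit, accFrom_append] at hacc
  obtain ⟨q₂, v₂, hreach₂, hacc₂⟩ := hacc
  rw [hshift, accFrom_append]
  refine ⟨q₁, v₁, hreach, (accFrom_append ..).2 ⟨q₂, v₂, hreach₂, ?_⟩⟩
  refine accFrom_shiftedTime_of_accFrom_witnessTime hj₁ hjn (by omega) (by omega)
    (fun x => ?_) hacc₂
  obtain ⟨i, hi, hij, h⟩ := exists_clock_eq_witnessTime_sub hjn hreach hreach₂ hforget x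
  refine ⟨i, hi, hij, h, ?_⟩
  rw [h, shiftedTime_of_lt n (by omega), shiftedTime_of_lt n (by omega)]

theorem lang_ne_noUnitGapATA [Fintype C] (N : NTA Unit C Q) : N.lang ≠ noUnitGapATA.lang := by
  intro hN
  have hmem : ∀ w, w ∈ N.lang ↔ NoUnitGap w := fun w => by
    rw [hN, noUnitGapATA.lang_eq, Set.mem_ofPred_eq]
  set n := Fintype.card C + 1
  have hW := (hmem _).2 (witness_noUnitGap n)
  rw [NTA.lang, Set.mem_ofPred_eq, witness, two_mul, wordOfTimes_add, zero_add,
    accFrom_append] at hW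
  obtain ⟨q₁, v₁, hreach, hacc⟩ := hW
  have hstore : ∀ j : Fin n, ∃ x, (v₁ x : ℝ) = witnessTime n n - witnessTime n (j + 1) := by
    intro j
    by_contra! hforget
    exact not_noUnitGap_shiftedWitness n (by omega) (by omega)
      ((hmem _).1 (accFrom_shiftedWitness (by omega) (by omega) hreach hacc hforget))
  choose clock hclock using hstore
  have hinj : Function.Injective clock := fun j₁ j₂ h => by
    have := (witnessTime_strictMono n).injective (sub_right_injective
      ((hclock j₁).symm.trans (h ▸ hclock j₂)))
    omega
  simpa [n] using Fintype.card_le_of_injective clock hinj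

end NTA

/-- Zones of the time line after the two opening events at `1/4` and `1/2`: `early` is
`(1, 5/4)`, `window` is `(5/4, 3/2)` and `late` is `(3/2, 7/4)`. -/
inductive Zone : Type
  | early
  | window
  | late
deriving DecidableEq

namespace Zone

noncomputable def start : Zone → ℝ
  | early => 1
  | window => 5 / 4
  | late => 3 / 2

lemma one_le_start (z : Zone) : 1 ≤ z.start := by cases z <;> norm_num [start]

/-- A time in zone `z` after time `T`, with `T < z.start + 1/4`. -/
noncomputable def nextTime (z : Zone) (T : ℝ) : ℝ := (max T z.start + (z.start + 1 / 4)) / 2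

variable {z : Zone} {T : ℝ}

lemma start_lt_nextTime : z.start < z.nextTime T := by
  unfold nextTime; linarith [le_max_right T z.start]

lemma nextTime_lt (hT : T < z.start + 1 / 4) : z.nextTime T < z.start + 1 / 4 := by
  have := max_lt hT (by linarith : z.start < z.start + 1 / 4)
  unfold nextTime; linarith

lemma lt_nextTime (hT : T < z.start + 1 / 4) : T < z.nextTime T := by
  have := max_lt hT (by linarith : z.start < z.start + 1 / 4)
  unfold nextTime; linarith [le_max_left T z.start]

end Zone

noncomputable def zoneWord : List Zone → ℝ → TimedWord Unit
  | [], _ => []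
  | z :: zs, T => ((), (z.nextTime T - T).toNNReal) :: zoneWord zs (z.nextTime T)

noncomputable def prefixedZoneWord (zs : List Zone) : TimedWord Unit :=
  ((), 1 / 4) :: ((), 1 / 4) :: zoneWord zs (1 / 2)

def Zone.Admissible (zs : List Zone) (T : ℝ) : Prop :=
  zs.Pairwise (fun a b => a.start ≤ b.start) ∧ ∀ z ∈ zs, T < z.start + 1 / 4

lemma Zone.Admissible.of_cons {z : Zone} {zs : List Zone} {T : ℝ} (h : Admissible (z :: zs) T) :
    T < z.start + 1 / 4 ∧ Admissible zs (z.nextTime T) := by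
  obtain ⟨hsort, hT⟩ := h
  have hz := hT z List.mem_cons_self
  refine ⟨hz, (List.pairwise_cons.mp hsort).2, fun z' hz' => ?_⟩
  linarith [(List.pairwise_cons.mp hsort).1 z' hz', nextTime_lt hz]

def zoneList (p m q : ℕ) : List Zone :=
  List.replicate p .early ++ List.replicate m .window ++ List.replicate q .late

lemma admissible_zoneList (p m q : ℕ) : Zone.Admissible (zoneList p m q) (1 / 2) := by
  refine ⟨?_, fun z _ => by linarith [z.one_le_start]⟩
  simp only [zoneList, List.pairwise_append, List.pairwise_replicate, List.mem_append,
    List.mem_replicate]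
  norm_num [Zone.start]
  rintro _ (⟨-, rfl⟩ | ⟨-, rfl⟩) - <;> norm_num

inductive WindowLoc : Type
  | start
  | first
  | wait
  | done
deriving DecidableEq

instance : Fintype WindowLoc :=
  ⟨{.start, .first, .wait, .done}, fun q => by cases q <;> simp⟩

def trueGuard : ClockConstraint (Fin 2) := .neg (.lt 0 0)

def windowGuard : ClockConstraint (Fin 2) := .conj (.neg (.le 0 1)) (.lt 1 1)

lemma trueGuard_sat (v : Fin 2 → NNReal) : trueGuard.sat v := by
  simp [trueGuard, ClockConstraint.sat]

lemma windowGuard_sat (v : Fin 2 → NNReal) :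
    windowGuard.sat v ↔ 1 < (v 0 : ℝ) ∧ (v 1 : ℝ) < 1 := by
  simp [windowGuard, ClockConstraint.sat]

def windowNTA.hitRule : NTARule Unit (Fin 2) WindowLoc := ⟨.wait, (), windowGuard, .done, ∅⟩

def windowNTA.missRule : NTARule Unit (Fin 2) WindowLoc :=
  ⟨.wait, (), .neg windowGuard, .wait, ∅⟩

/-- Clock `0` is reset at the first event and clock `1` at the second; a word is accepted iff
a later event comes more than one time unit after the first event and less than one after the
second. -/
def windowNTA : NTA Unit (Fin 2) WindowLoc where
  init := .start
  accept := {.done}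
  rules :=
    [⟨.start, (), trueGuard, .first, {0}⟩, ⟨.first, (), trueGuard, .wait, {1}⟩,
      windowNTA.hitRule, windowNTA.missRule, ⟨.done, (), trueGuard, .done, ∅⟩]

namespace windowNTA

lemma deterministic : windowNTA.Deterministic := by
  intro v ρ₁ h₁ ρ₂ h₂ hsrc _ hs₁ hs₂
  simp only [windowNTA, hitRule, missRule, List.mem_cons, List.not_mem_nil, or_false] at h₁ h₂
  rcases h₁ with rfl | rfl | rfl | rfl | rfl <;> rcases h₂ with rfl | rfl | rfl | rfl | rfl <;>
    first
      | rfl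
      | exact absurd hsrc (by decide)
      | exact absurd hs₁ hs₂
      | exact absurd hs₂ hs₁

lemma accFrom_done (w : TimedWord Unit) (v : Fin 2 → NNReal) : windowNTA.AccFrom w .done v := by
  induction w generalizing v with
  | nil => rfl
  | cons e w ih => exact ⟨⟨.done, (), trueGuard, .done, ∅⟩, by simp [windowNTA], rfl, rfl,
      trueGuard_sat _, ih _⟩

lemma accFrom_zoneWord_wait_iff {zs : List Zone} {T : ℝ} (hzs : Zone.Admissible zs T)
    {v : Fin 2 → NNReal} (hv₀ : (v 0 : ℝ) = T - 1 / 4) (hv₁ : (v 1 : ℝ) = T - 1 / 2) :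
    windowNTA.AccFrom (zoneWord zs T) .wait v ↔ .window ∈ zs := by
  induction zs generalizing T v with
  | nil => simp [zoneWord, NTA.AccFrom, windowNTA]
  | cons z zs ih =>
    obtain ⟨hT, hzs⟩ := hzs.of_cons
    have hd : ((z.nextTime T - T).toNNReal : ℝ) = z.nextTime T - T :=
      Real.coe_toNNReal _ (sub_nonneg.mpr (Zone.lt_nextTime hT).le)
    have hsat : windowGuard.sat (fun x => v x + (z.nextTime T - T).toNNReal) ↔ z = .window := by
      have h₁ := Zone.start_lt_nextTime (z := z) (T := T)
      have h₂ := Zone.nextTime_lt hT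
      rw [windowGuard_sat, NNReal.coe_add, NNReal.coe_add, hd, hv₀, hv₁]
      constructor
      · rintro ⟨ha, hb⟩
        cases z <;> norm_num [Zone.start] at h₁ h₂ ⊢ <;> linarith
      · rintro rfl
        norm_num [Zone.start] at h₁ h₂ ⊢
        constructor <;> linarith
    rw [zoneWord]
    by_cases hz : z = .window
    · subst hz
      exact (deterministic.accFrom_cons_iff (ρ := hitRule) (a := ()) (by simp [windowNTA]) rfl
        (hsat.2 rfl)).trans (iff_of_true (accFrom_done _ _) List.mem_cons_self)
    · refine (deterministic.accFrom_cons_iff (ρ := missRule) (a := ()) (by simp [windowNTA]) rfl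
        (not_congr hsat |>.2 hz)).trans ?_
      rw [List.mem_cons, or_iff_right (Ne.symm hz), missRule, resetVal_empty]
      refine ih hzs ?_ ?_ <;> simp only [NNReal.coe_add, hd, hv₀, hv₁] <;> ring

lemma prefixedZoneWord_mem_lang_iff {zs : List Zone} (hzs : Zone.Admissible zs (1 / 2)) :
    prefixedZoneWord zs ∈ windowNTA.lang ↔ .window ∈ zs := by
  refine (deterministic.accFrom_cons_iff (ρ := ⟨.start, (), trueGuard, .first, {0}⟩)
    (by simp [windowNTA]) rfl (trueGuard_sat _)).trans ?_
  refine (deterministic.accFrom_cons_iff (ρ := ⟨.first, (), trueGuard, .wait, {1}⟩)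
    (by simp [windowNTA]) rfl (trueGuard_sat _)).trans ?_
  refine accFrom_zoneWord_wait_iff hzs ?_ ?_ <;> norm_num [resetVal]

end windowNTA

/-- On a prefixed zone word, the clock of a one-clock ATA was last reset never, at the first
event, at the second event, or after time `1`. -/
inductive ResetClass : Type
  | never
  | first
  | second
  | late

namespace ResetClass

/-- Whether a clock of this class reads a value in `(1, 2)`, rather than in `(0, 1)`, at an
event in zone `z`. -/
def upper : ResetClass → Zone → Bool
  | never, _ => true
  | first, .early => false
  | first, _ => true
  | second, .late => true
  | second, _ => false
  | late, _ => false

lemma upper_window_eq (c : ResetClass) :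
    c.upper .window = c.upper .early ∨ c.upper .window = c.upper .late := by
  cases c <;> simp [upper]

def Holds : ResetClass → ℝ → NNReal → Prop
  | never, T, u => (u : ℝ) = T
  | first, T, u => (u : ℝ) = T - 1 / 4
  | second, T, u => (u : ℝ) = T - 1 / 2
  | late, T, u => ∃ r : ℝ, 1 < r ∧ r ≤ T ∧ (u : ℝ) = T - r

lemma Holds.delay {c : ResetClass} {T T' : ℝ} {u : NNReal} (h : c.Holds T u) (hT : T ≤ T') :
    c.Holds T' (u + (T' - T).toNNReal) := by
  have hu : ((u + (T' - T).toNNReal : NNReal) : ℝ) = u + (T' - T) := by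
    rw [NNReal.coe_add, Real.coe_toNNReal _ (sub_nonneg.mpr hT)]
  cases c with
  | late =>
    obtain ⟨r, hr₁, hr₂, hr⟩ := h
    exact ⟨r, hr₁, by linarith, by rw [hu, hr]; ring⟩
  | _ => simp only [Holds] at h ⊢; rw [hu, h]; ring

lemma holds_late_zero {T : ℝ} (hT : 1 < T) : late.Holds T 0 := ⟨T, hT, le_rfl, by simp⟩

end ResetClass

noncomputable def upperValue (b : Bool) : NNReal := if b then 3 / 2 else 1 / 2

lemma sameUnitInterval_upperValue_false {x : ℝ} (h : x ∈ Set.Ioo 0 1) :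
    SameUnitInterval x (upperValue false) :=
  ⟨0, by simpa using h, by norm_num [upperValue]⟩

lemma sameUnitInterval_upperValue_true {x : ℝ} (h : x ∈ Set.Ioo 1 2) :
    SameUnitInterval x (upperValue true) :=
  ⟨1, by norm_num; exact h, by norm_num [upperValue]⟩

lemma ResetClass.Holds.sameUnitInterval_upperValue {c : ResetClass} {T : ℝ} {u : NNReal}
    (h : c.Holds T u) {z : Zone} (hz : T < z.start + 1 / 4) :
    SameUnitInterval (u + (z.nextTime T - T)) (upperValue (c.upper z)) := by
  have h₁ := z.start_lt_nextTime (T := T)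
  have h₂ := Zone.nextTime_lt hz
  have h₃ := Zone.lt_nextTime hz
  cases c with
  | late =>
    obtain ⟨r, hr₁, hr₂, hr⟩ := h
    have : z.start ≤ 3 / 2 := by cases z <;> norm_num [Zone.start]
    exact sameUnitInterval_upperValue_false ⟨by linarith, by linarith⟩
  | _ =>
    cases z <;> simp only [ResetClass.Holds, ResetClass.upper, Zone.start] at h h₁ h₂ ⊢ <;>
      first
        | exact sameUnitInterval_upperValue_false ⟨by linarith, by linarith⟩
        | exact sameUnitInterval_upperValue_true ⟨by linarith, by linarith⟩

namespace ATA

variable {Q : Type} (M : ATA Unit (Fin 1) Q)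

open Classical in
/-- One step of the acceptance condition on zone words, with the clock abstracted to its
reset class. -/
def zoneStep (z : Zone) (g : Q → ResetClass → Prop) : Q → ResetClass → Prop :=
  fun q c => ∃ gb ∈ M.trans q (), gb.1.sat (fun _ => upperValue (c.upper z)) ∧
    gb.2.eval fun qr => g qr.1 (if 0 ∈ qr.2 then .late else c)

def zoneAcc (zs : List Zone) : Q → ResetClass → Prop :=
  zs.foldr M.zoneStep fun q _ => q ∈ M.accept

lemma accFrom_zoneWord_iff {zs : List Zone} {T : ℝ} (hzs : Zone.Admissible zs T)
    {q : Q} {c : ResetClass} {v : Fin 1 → NNReal} (hv : c.Holds T (v 0)) :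
    M.AccFrom (zoneWord zs T) q v ↔ M.zoneAcc zs q c := by
  classical
  induction zs generalizing T q c v with
  | nil => rfl
  | cons z zs ih =>
    obtain ⟨hz, hzs⟩ := hzs.of_cons
    have hdelay : T ≤ z.nextTime T := (Zone.lt_nextTime hz).le
    refine exists_congr fun gb => and_congr_right fun _ => and_congr ?_ ?_
    · refine gb.1.sat_congr fun x => ?_
      rw [Subsingleton.elim x 0, NNReal.coe_add, Real.coe_toNNReal _ (sub_nonneg.mpr hdelay)]
      exact hv.sameUnitInterval_upperValue hz
    · refine gb.2.eval_congr fun qr => ih hzs ?_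
      by_cases h0 : (0 : Fin 1) ∈ qr.2
      · rw [if_pos h0, resetVal_of_mem _ h0]
        exact ResetClass.holds_late_zero
          (by linarith [z.start_lt_nextTime (T := T), z.one_le_start])
      · rw [if_neg h0, resetVal_of_notMem _ h0]
        exact hv.delay hdelay

/-- The part of a `zoneAcc`-vector seen by one reset class `c`, together with the
class `late` into which resets move it. -/
def column (c : ResetClass) (g : Q → ResetClass → Prop) : (Q → Prop) × (Q → Prop) :=
  (fun q => g q c, fun q => g q .late)

open Classical in
def columnStep (b : Bool) (x : (Q → Prop) × (Q → Prop)) : (Q → Prop) × (Q → Prop) :=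
  (fun q => ∃ gb ∈ M.trans q (), gb.1.sat (fun _ => upperValue b) ∧
      gb.2.eval fun qr => if 0 ∈ qr.2 then x.2 qr.1 else x.1 qr.1,
    fun q => ∃ gb ∈ M.trans q (), gb.1.sat (fun _ => upperValue false) ∧
      gb.2.eval fun qr => x.2 qr.1)

lemma column_zoneStep (c : ResetClass) (z : Zone) :
    Function.Semiconj (column c) (M.zoneStep z) (M.columnStep (c.upper z)) := fun g => by
  classical
  simp only [column, zoneStep, columnStep, apply_ite (g _), ite_self]
  rfl

lemma zoneAcc_zoneList (p m q : ℕ) :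
    M.zoneAcc (zoneList p m q) =
      (M.zoneStep .early)^[p] ((M.zoneStep .window)^[m] ((M.zoneStep .late)^[q]
        (fun q _ => q ∈ M.accept))) := by
  have hrep : ∀ (z : Zone) (k : ℕ) (g : Q → ResetClass → Prop),
      (List.replicate k z).foldr M.zoneStep g = (M.zoneStep z)^[k] g := fun z k g => by
    induction k with
    | zero => rfl
    | succ k ih => rw [List.replicate_succ, List.foldr_cons, ih, Function.iterate_succ_apply']
  simp only [zoneAcc, zoneList, List.foldr_append, hrep]

/-- The window zone is invisible to a one-clock ATA: each reset class sees it like the early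
zone or like the late one, so repeating it `P` times, for a common period `P` of all self-maps
of the finite column type, changes nothing. -/
lemma exists_zoneAcc_zoneList_eq [Finite Q] :
    ∃ K P : ℕ, 0 < P ∧ M.zoneAcc (zoneList K P K) = M.zoneAcc (zoneList K 0 K) := by
  obtain ⟨K, P, hP, hper⟩ := Finite.exists_iterate_add_eq ((Q → Prop) × (Q → Prop))
  refine ⟨K, P, hP, funext fun q => funext fun c => ?_⟩
  suffices h : column c (M.zoneAcc (zoneList K P K)) = column c (M.zoneAcc (zoneList K 0 K)) from
    congrFun (congrArg Prod.fst h) q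
  simp only [zoneAcc_zoneList, (M.column_zoneStep c _).iterate_right _ _,
    Function.iterate_zero, id]
  rcases c.upper_window_eq with h | h <;> rw [h]
  · rw [← Function.iterate_add_apply, hper]
  · rw [← Function.iterate_add_apply, add_comm, hper]

lemma exists_holds_of_prefix (r₁ r₂ : Set (Fin 1)) :
    ∃ c : ResetClass, c.Holds (1 / 2)
      (resetVal (fun x => resetVal (fun _ => (0 : NNReal) + 1 / 4) r₁ x + 1 / 4) r₂ 0) := by
  by_cases h₂ : (0 : Fin 1) ∈ r₂
  · exact ⟨.second, by simp [ResetClass.Holds, resetVal_of_mem _ h₂]⟩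
  by_cases h₁ : (0 : Fin 1) ∈ r₁
  · exact ⟨.first, by
      norm_num [ResetClass.Holds, resetVal_of_notMem _ h₂, resetVal_of_mem _ h₁]⟩
  · exact ⟨.never, by
      norm_num [ResetClass.Holds, resetVal_of_notMem _ h₂, resetVal_of_notMem _ h₁]⟩

lemma prefixedZoneWord_mem_lang_iff_of_zoneAcc_eq {zs zs' : List Zone}
    (hzs : Zone.Admissible zs (1 / 2)) (hzs' : Zone.Admissible zs' (1 / 2))
    (h : M.zoneAcc zs = M.zoneAcc zs') :
    prefixedZoneWord zs ∈ M.lang ↔ prefixedZoneWord zs' ∈ M.lang := by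
  refine M.accFrom_cons_congr fun q₁ r₁ => M.accFrom_cons_congr fun q₂ r₂ => ?_
  obtain ⟨c, hc⟩ := exists_holds_of_prefix r₁ r₂
  rw [M.accFrom_zoneWord_iff hzs hc, M.accFrom_zoneWord_iff hzs' hc, h]

theorem lang_ne_windowNTA [Finite Q] : M.lang ≠ windowNTA.lang := by
  intro hM
  obtain ⟨K, P, hP, heq⟩ := M.exists_zoneAcc_zoneList_eq
  have hmem := M.prefixedZoneWord_mem_lang_iff_of_zoneAcc_eq (admissible_zoneList K P K)
    (admissible_zoneList K 0 K) heq
  rw [hM, windowNTA.prefixedZoneWord_mem_lang_iff (admissible_zoneList K P K),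
    windowNTA.prefixedZoneWord_mem_lang_iff (admissible_zoneList K 0 K)] at hmem
  simp [zoneList, hP.ne'] at hmem

end ATA

/-- The classes of timed languages recognizable by
nondeterministic timed automata (with any number of clocks) and by one-clock
alternating timed automata are incomparable: some one-clock ATA language is
no NTA language, and some language of a deterministic two-clock NTA is no
one-clock ATA language. -/
theorem nta_and_one_clock_ata_incomparable :
    (∃ (Q : Type) (_ : Fintype Q) (M : ATA Unit (Fin 1) Q),
        ∀ (C Q' : Type), Fintype C → Fintype Q' →
          ∀ N : NTA Unit C Q', N.lang ≠ M.lang) ∧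
    (∃ (Q : Type) (_ : Fintype Q) (N : NTA Unit (Fin 2) Q), N.Deterministic ∧
        ∀ (Q' : Type), Fintype Q' →
          ∀ M : ATA Unit (Fin 1) Q', M.lang ≠ N.lang) :=
  ⟨⟨GapLoc, inferInstance, noUnitGapATA, fun _ _ _ _ N => N.lang_ne_noUnitGapATA⟩,
    ⟨WindowLoc, inferInstance, windowNTA, windowNTA.deterministic,
      fun _ _ M => M.lang_ne_windowNTA⟩⟩
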